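/- arXiv:2412.13665 — 5 statements merged into one kernel-verified Lean document; each statement's English description precedes it below -/
import Mathlib

section
/- Let D ≥ 1, σ > 0, and for each t ∈ [0,1] let p_t : ℝ^D → ℝ be a continuously differentiable strictly positive probability density. Let μ : ℝ^D × [0,1] → ℝ^D be continuous and define φ*(x,t) = −μ(x,t) + σ² ∇_x log p_t(x). For continuously differentiable φ : ℝ^D × [0,1] → ℝ^D define the cost functional L[φ] = ∫₀¹ ∫_{ℝ^D} p_t(x) ( ‖φ(x,t)‖² + 2 ⟪μ(x,t), φ(x,t)⟫ + 2 σ² tr J_φ(x,t) ) dx dt, where J_φ denotes the Jacobian of φ(·,t) and tr its trace. Assume φ and φ* are such that all integrands above are integrable and that for a.e. t ∈ [0,1] the divergence identity ∫_{ℝ^D} ( p_t(x) tr J_φ(x,t) + ⟪φ(x,t), ∇p_t(x)⟫ ) dx = 0 holds (e.g. φ(·,t) − φ*(·,t) compactly supported, or sufficient decay at infinity), and likewise for φ*. Then L[φ] ≥ L[φ*]; that is, the functional L is minimized by φ = −μ + σ² ∇_x log p_t. -/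
/-!
Write `s = -μ + σ² ∇ log p` and fix a time. Since `p ∇ log p = ∇ p`, one has
`p ⟪f, s⟫ = -p ⟪μ, f⟫ + σ² ⟪f, ∇p⟫`, and the divergence identity turns `σ² ∫ p div f`
into `-σ² ∫ ⟪f, ∇p⟫`. Hence the inner cost integral of `f` is
`∫ p (‖f‖² - 2⟪f, s⟫) = ∫ p ‖f - s‖² - ∫ p ‖s‖²`, which is smallest for `f = s`.
Integrating the resulting pointwise-in-time inequality over `[0, 1]` gives the theorem.
-/

open MeasureTheory
open scoped RealInnerProductSpace

/-- The divergence (trace of the Jacobian) of a vector field `f : ℝ^D → ℝ^D`: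
`tr J_f(x) = ∑ i ∂_i f_i(x)`. -/
noncomputable def divg {D : ℕ}
    (f : EuclideanSpace ℝ (Fin D) → EuclideanSpace ℝ (Fin D))
    (x : EuclideanSpace ℝ (Fin D)) : ℝ :=
  ∑ i, fderiv ℝ f x (EuclideanSpace.single i 1) i

theorem gradient_log_eq_inv_smul {E : Type*} [NormedAddCommGroup E] [InnerProductSpace ℝ E]
    [CompleteSpace E] {p : E → ℝ} {x : E} (hp : DifferentiableAt ℝ p x) (hx : p x ≠ 0) :
    gradient (fun y => Real.log (p y)) x = (p x)⁻¹ • gradient p x := by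
  rw [gradient, (hp.hasFDerivAt.log hx).fderiv, map_smul, gradient]

section ScoreCost

variable {D : ℕ} (σ : ℝ) (p : EuclideanSpace ℝ (Fin D) → ℝ)
  (μ f s : EuclideanSpace ℝ (Fin D) → EuclideanSpace ℝ (Fin D))
  (ν : Measure (EuclideanSpace ℝ (Fin D)))

/-- The integrand in `t` of the cost functional `L[f]`, with `p = p_t`, `μ = μ(·, t)`,
`f = f(·, t)`. -/
noncomputable def scoreCost : ℝ :=
  ∫ x, p x * (‖f x‖ ^ 2 + 2 * ⟪μ x, f x⟫ + 2 * σ ^ 2 * divg f x) ∂ν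

variable {σ p μ f s ν}

theorem scoreCost_eq_add
    (h_sq : Integrable (fun x => p x * ‖f x‖ ^ 2) ν)
    (h_drift : Integrable (fun x => p x * ⟪μ x, f x⟫) ν)
    (h_div : Integrable (fun x => p x * divg f x) ν) :
    scoreCost σ p μ f ν = (∫ x, p x * ‖f x‖ ^ 2 ∂ν) + 2 * (∫ x, p x * ⟪μ x, f x⟫ ∂ν)
      + 2 * σ ^ 2 * ∫ x, p x * divg f x ∂ν := by
  have h_lin : Integrable (fun x => p x * ‖f x‖ ^ 2 + 2 * (p x * ⟪μ x, f x⟫)) ν :=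
    h_sq.add (h_drift.const_mul 2)
  calc scoreCost σ p μ f ν
      = ∫ x, (p x * ‖f x‖ ^ 2 + 2 * (p x * ⟪μ x, f x⟫)) + 2 * σ ^ 2 * (p x * divg f x) ∂ν := by
        unfold scoreCost
        congr 1 with x
        ring
    _ = _ := by
        rw [integral_add h_lin (h_div.const_mul _), integral_add h_sq (h_drift.const_mul 2),
          integral_const_mul, integral_const_mul]

theorem mul_inner_eq_of_eq_neg_add_smul_gradient_log (hp : Differentiable ℝ p)
    (hp_ne : ∀ x, p x ≠ 0) (hs : ∀ x, s x = -μ x + σ ^ 2 • gradient (fun y => Real.log (p y)) x)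
    (x : EuclideanSpace ℝ (Fin D)) :
    p x * ⟪f x, s x⟫ = σ ^ 2 * ⟪f x, gradient p x⟫ - p x * ⟪μ x, f x⟫ := by
  rw [hs, gradient_log_eq_inv_smul (hp x) (hp_ne x), inner_add_right, inner_neg_right,
    real_inner_smul_right, real_inner_smul_right, real_inner_comm (μ x)]
  field_simp [hp_ne x]
  ring

theorem scoreCost_eq_integral_sub (hp : Differentiable ℝ p) (hp_ne : ∀ x, p x ≠ 0)
    (hs : ∀ x, s x = -μ x + σ ^ 2 • gradient (fun y => Real.log (p y)) x)
    (h_sq : Integrable (fun x => p x * ‖f x‖ ^ 2) ν)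
    (h_drift : Integrable (fun x => p x * ⟪μ x, f x⟫) ν)
    (h_div : Integrable (fun x => p x * divg f x) ν)
    (h_grad : Integrable (fun x => ⟪f x, gradient p x⟫) ν)
    (hs_sq : Integrable (fun x => p x * ‖s x‖ ^ 2) ν)
    (hdiv : ∫ x, (p x * divg f x + ⟪f x, gradient p x⟫) ∂ν = 0) :
    scoreCost σ p μ f ν = (∫ x, p x * ‖f x - s x‖ ^ 2 ∂ν) - ∫ x, p x * ‖s x‖ ^ 2 ∂ν := by
  have h_parts : ∫ x, p x * divg f x ∂ν = -∫ x, ⟪f x, gradient p x⟫ ∂ν := by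
    rw [integral_add h_div h_grad] at hdiv
    linarith
  have h_expand : ∀ x, p x * ‖f x - s x‖ ^ 2 = p x * ‖f x‖ ^ 2 + 2 * (p x * ⟪μ x, f x⟫)
      - 2 * σ ^ 2 * ⟪f x, gradient p x⟫ + p x * ‖s x‖ ^ 2 := fun x => by
    rw [norm_sub_sq_real]
    linear_combination (-2) * mul_inner_eq_of_eq_neg_add_smul_gradient_log hp hp_ne hs x
  have h_lin : Integrable (fun x => p x * ‖f x‖ ^ 2 + 2 * (p x * ⟪μ x, f x⟫)) ν :=
    h_sq.add (h_drift.const_mul 2)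
  have h_lin' : Integrable (fun x => p x * ‖f x‖ ^ 2 + 2 * (p x * ⟪μ x, f x⟫)
      - 2 * σ ^ 2 * ⟪f x, gradient p x⟫) ν := h_lin.sub (h_grad.const_mul _)
  rw [scoreCost_eq_add h_sq h_drift h_div, h_parts, integral_congr_ae (.of_forall h_expand),
    integral_add h_lin' hs_sq, integral_sub h_lin (h_grad.const_mul _),
    integral_add h_sq (h_drift.const_mul 2), integral_const_mul, integral_const_mul]
  ring

theorem scoreCost_le (hp : Differentiable ℝ p) (hp_pos : ∀ x, 0 < p x)
    (hs : ∀ x, s x = -μ x + σ ^ 2 • gradient (fun y => Real.log (p y)) x)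
    (h_sq : Integrable (fun x => p x * ‖f x‖ ^ 2) ν)
    (h_drift : Integrable (fun x => p x * ⟪μ x, f x⟫) ν)
    (h_div : Integrable (fun x => p x * divg f x) ν)
    (h_grad : Integrable (fun x => ⟪f x, gradient p x⟫) ν)
    (hdiv : ∫ x, (p x * divg f x + ⟪f x, gradient p x⟫) ∂ν = 0)
    (hs_sq : Integrable (fun x => p x * ‖s x‖ ^ 2) ν)
    (hs_drift : Integrable (fun x => p x * ⟪μ x, s x⟫) ν)
    (hs_div : Integrable (fun x => p x * divg s x) ν)
    (hs_grad : Integrable (fun x => ⟪s x, gradient p x⟫) ν)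
    (hs_div_eq : ∫ x, (p x * divg s x + ⟪s x, gradient p x⟫) ∂ν = 0) :
    scoreCost σ p μ s ν ≤ scoreCost σ p μ f ν := by
  have hp_ne x := (hp_pos x).ne'
  rw [scoreCost_eq_integral_sub hp hp_ne hs h_sq h_drift h_div h_grad hs_sq hdiv,
    scoreCost_eq_integral_sub hp hp_ne hs hs_sq hs_drift hs_div hs_grad hs_sq hs_div_eq]
  simp only [sub_self, norm_zero, ne_eq, OfNat.ofNat_ne_zero, not_false_eq_true, zero_pow,
    mul_zero, integral_zero, sub_le_sub_iff_right]
  exact integral_nonneg fun x => mul_nonneg (hp_pos x).le (sq_nonneg _)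

end ScoreCost

theorem costFunctional_minimized_by_reverse_drift_general
    (D : ℕ) (σ : ℝ)
    (p : ℝ → EuclideanSpace ℝ (Fin D) → ℝ)
    (hp_diff : ∀ t ∈ Set.Icc (0:ℝ) 1, ContDiff ℝ 1 (p t))
    (hp_pos : ∀ t ∈ Set.Icc (0:ℝ) 1, ∀ x, 0 < p t x)
    (μ : EuclideanSpace ℝ (Fin D) → ℝ → EuclideanSpace ℝ (Fin D))
    (φ φs : EuclideanSpace ℝ (Fin D) → ℝ → EuclideanSpace ℝ (Fin D))
    (hφs : ∀ x t, φs x t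
      = -μ x t + σ ^ 2 • gradient (fun y => Real.log (p t y)) x)
    -- integrability in `x` of every integrand appearing above, for both `φ` and `φ*`
    (hInt : ∀ f ∈ ({φ, φs} :
        Set (EuclideanSpace ℝ (Fin D) → ℝ → EuclideanSpace ℝ (Fin D))),
      ∀ t ∈ Set.Icc (0:ℝ) 1,
        Integrable (fun x => p t x * ‖f x t‖ ^ 2) ∧
        Integrable (fun x => p t x * ⟪μ x t, f x t⟫) ∧
        Integrable (fun x => p t x * divg (fun y => f y t) x) ∧
        Integrable (fun x => ⟪f x t, gradient (p t) x⟫))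
    -- integrability in `t` of the corresponding time integrands
    (hIntT : ∀ f ∈ ({φ, φs} :
        Set (EuclideanSpace ℝ (Fin D) → ℝ → EuclideanSpace ℝ (Fin D))),
      IntegrableOn (fun t => ∫ x, p t x * ‖f x t‖ ^ 2) (Set.Icc (0:ℝ) 1) ∧
      IntegrableOn (fun t => ∫ x, p t x * ⟪μ x t, f x t⟫) (Set.Icc (0:ℝ) 1) ∧
      IntegrableOn (fun t => ∫ x, p t x * divg (fun y => f y t) x) (Set.Icc (0:ℝ) 1))
    -- the divergence identity, for a.e. `t ∈ [0,1]`, for both `φ` and `φ*`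
    (hdiv : ∀ f ∈ ({φ, φs} :
        Set (EuclideanSpace ℝ (Fin D) → ℝ → EuclideanSpace ℝ (Fin D))),
      ∀ᵐ t ∂(volume.restrict (Set.Icc (0:ℝ) 1)),
        ∫ x, (p t x * divg (fun y => f y t) x + ⟪f x t, gradient (p t) x⟫) = 0) :
    ∫ t in Set.Icc (0:ℝ) 1, ∫ x,
        p t x * (‖φs x t‖ ^ 2 + 2 * ⟪μ x t, φs x t⟫
          + 2 * σ ^ 2 * divg (fun y => φs y t) x)
      ≤ ∫ t in Set.Icc (0:ℝ) 1, ∫ x,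
        p t x * (‖φ x t‖ ^ 2 + 2 * ⟪μ x t, φ x t⟫
          + 2 * σ ^ 2 * divg (fun y => φ y t) x) := by
  have hφ_mem : φ ∈ ({φ, φs} : Set _) := .inl rfl
  have hφs_mem : φs ∈ ({φ, φs} : Set _) := .inr rfl
  have h_integrable : ∀ f ∈ ({φ, φs} : Set _), IntegrableOn
      (fun t => scoreCost σ (p t) (fun x => μ x t) (fun x => f x t) volume) (Set.Icc 0 1) := by
    intro f hf
    obtain ⟨hT_sq, hT_drift, hT_div⟩ := hIntT f hf
    refine ((hT_sq.add (hT_drift.const_mul 2)).add (hT_div.const_mul (2 * σ ^ 2))).congr_fun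
      (fun t ht => ?_) measurableSet_Icc
    obtain ⟨h_sq, h_drift, h_div, -⟩ := hInt f hf t ht
    exact (scoreCost_eq_add h_sq h_drift h_div).symm
  refine integral_mono_ae (h_integrable φs hφs_mem) (h_integrable φ hφ_mem) ?_
  filter_upwards [hdiv φ hφ_mem, hdiv φs hφs_mem, ae_restrict_mem measurableSet_Icc]
    with t hφ_div hφs_div ht
  obtain ⟨h_sq, h_drift, h_div, h_grad⟩ := hInt φ hφ_mem t ht
  obtain ⟨hs_sq, hs_drift, hs_div, hs_grad⟩ := hInt φs hφs_mem t ht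
  exact scoreCost_le ((hp_diff t ht).differentiable one_ne_zero) (hp_pos t ht) (fun x => hφs x t)
    h_sq h_drift h_div h_grad hφ_div hs_sq hs_drift hs_div hs_grad hφs_div

/-- **The score-matching cost functional is minimized by `φ* = -μ + σ² ∇ log p`.**
For `C¹` strictly positive probability densities `p t`, a continuous drift `μ`, a `C¹`
candidate `φ` and `φ*(x,t) = -μ(x,t) + σ² ∇ₓ log p_t(x)`, under integrability of all
integrands and the divergence identity
`∫ (p_t tr J_f + ⟪f, ∇p_t⟫) dx = 0` for a.e. `t` (for both `f = φ` and `f = φ*`),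
one has `L[φ*] ≤ L[φ]` where
`L[f] = ∫₀¹ ∫ p_t(x) (‖f‖² + 2⟪μ, f⟫ + 2σ² tr J_f) dx dt`. -/
theorem costFunctional_minimized_by_reverse_drift
    (D : ℕ) (hD : 1 ≤ D) (σ : ℝ) (hσ : 0 < σ)
    (p : ℝ → EuclideanSpace ℝ (Fin D) → ℝ)
    (hp_diff : ∀ t ∈ Set.Icc (0:ℝ) 1, ContDiff ℝ 1 (p t))
    (hp_pos : ∀ t ∈ Set.Icc (0:ℝ) 1, ∀ x, 0 < p t x)
    (hp_prob : ∀ t ∈ Set.Icc (0:ℝ) 1, ∫ x, p t x = 1)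
    (μ : EuclideanSpace ℝ (Fin D) → ℝ → EuclideanSpace ℝ (Fin D))
    (hμ_cont : Continuous fun q : EuclideanSpace ℝ (Fin D) × ℝ => μ q.1 q.2)
    (φ φs : EuclideanSpace ℝ (Fin D) → ℝ → EuclideanSpace ℝ (Fin D))
    (hφs : ∀ x t, φs x t
      = -μ x t + σ ^ 2 • gradient (fun y => Real.log (p t y)) x)
    (hφ_diff : ContDiffOn ℝ 1 (fun q : EuclideanSpace ℝ (Fin D) × ℝ => φ q.1 q.2)
      (Set.univ ×ˢ Set.Icc (0:ℝ) 1))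
    -- integrability in `x` of every integrand appearing above, for both `φ` and `φ*`
    (hInt : ∀ f ∈ ({φ, φs} :
        Set (EuclideanSpace ℝ (Fin D) → ℝ → EuclideanSpace ℝ (Fin D))),
      ∀ t ∈ Set.Icc (0:ℝ) 1,
        Integrable (fun x => p t x * ‖f x t‖ ^ 2) ∧
        Integrable (fun x => p t x * ⟪μ x t, f x t⟫) ∧
        Integrable (fun x => p t x * divg (fun y => f y t) x) ∧
        Integrable (fun x => ⟪f x t, gradient (p t) x⟫))
    -- integrability in `t` of the corresponding time integrands
    (hIntT : ∀ f ∈ ({φ, φs} :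
        Set (EuclideanSpace ℝ (Fin D) → ℝ → EuclideanSpace ℝ (Fin D))),
      IntegrableOn (fun t => ∫ x, p t x * ‖f x t‖ ^ 2) (Set.Icc (0:ℝ) 1) ∧
      IntegrableOn (fun t => ∫ x, p t x * ⟪μ x t, f x t⟫) (Set.Icc (0:ℝ) 1) ∧
      IntegrableOn (fun t => ∫ x, p t x * divg (fun y => f y t) x) (Set.Icc (0:ℝ) 1))
    -- the divergence identity, for a.e. `t ∈ [0,1]`, for both `φ` and `φ*`
    (hdiv : ∀ f ∈ ({φ, φs} :
        Set (EuclideanSpace ℝ (Fin D) → ℝ → EuclideanSpace ℝ (Fin D))),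
      ∀ᵐ t ∂(volume.restrict (Set.Icc (0:ℝ) 1)),
        ∫ x, (p t x * divg (fun y => f y t) x + ⟪f x t, gradient (p t) x⟫) = 0) :
    ∫ t in Set.Icc (0:ℝ) 1, ∫ x,
        p t x * (‖φs x t‖ ^ 2 + 2 * ⟪μ x t, φs x t⟫
          + 2 * σ ^ 2 * divg (fun y => φs y t) x)
      ≤ ∫ t in Set.Icc (0:ℝ) 1, ∫ x,
        p t x * (‖φ x t‖ ^ 2 + 2 * ⟪μ x t, φ x t⟫
          + 2 * σ ^ 2 * divg (fun y => φ y t) x) :=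
  costFunctional_minimized_by_reverse_drift_general D σ p hp_diff hp_pos μ φ φs hφs hInt hIntT hdiv
end

section
/- Let D ≥ 1, σ > 0, and for each t ∈ [0,1] let p_t : ℝ^D → ℝ be a continuously differentiable strictly positive probability density. Let μ : ℝ^D × [0,1] → ℝ^D be continuous, set φ*(x,t) = −μ(x,t) + σ² ∇_x log p_t(x), and for continuously differentiable φ : ℝ^D × [0,1] → ℝ^D define L[φ] = ∫₀¹ ∫_{ℝ^D} p_t(x) ( ‖φ(x,t)‖² + 2 ⟪μ(x,t), φ(x,t)⟫ + 2 σ² tr J_φ(x,t) ) dx dt. Under the integrability assumptions that all integrands are integrable and that for a.e. t the divergence identity ∫_{ℝ^D} ( p_t(x) tr J_φ(x,t) + ⟪φ(x,t), ∇p_t(x)⟫ ) dx = 0 holds for φ and for φ*, one has the exact decomposition L[φ] = ∫₀¹ ∫_{ℝ^D} p_t(x) ‖φ(x,t) − φ*(x,t)‖² dx dt − ∫₀¹ ∫_{ℝ^D} p_t(x) ‖φ*(x,t)‖² dx dt. -/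
/-!
Completing the square: since `p ∇ log p = ∇p`, pointwise
`p ‖φ - φ*‖² = p ‖φ‖² + 2 p ⟪μ, φ⟫ - 2 σ² ⟪φ, ∇p⟫ + p ‖φ*‖²`.
The divergence identity trades `-∫ ⟪φ, ∇p⟫ dx` for `∫ p tr J_φ dx`, which gives the
decomposition of the inner integrals for a.e. `t`; integrating in `t` finishes the proof.
-/

open MeasureTheory
open scoped RealInnerProductSpace

theorem gradient_log_apply {F : Type*} [NormedAddCommGroup F] [InnerProductSpace ℝ F]
    [CompleteSpace F] {f : F → ℝ} {x : F} (hf : DifferentiableAt ℝ f x) (hx : f x ≠ 0) :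
    gradient (fun y => Real.log (f y)) x = (f x)⁻¹ • gradient f x := by
  rw [gradient, (hf.hasFDerivAt.log hx).fderiv, map_smul, gradient]

section
variable {E : Type*} [NormedAddCommGroup E] [InnerProductSpace ℝ E]

theorem mul_norm_sub_sq_of_eq_neg_add_smul {P c : ℝ} (hP : P ≠ 0) {v m g s : E}
    (hs : s = -m + c • P⁻¹ • g) :
    P * ‖v - s‖ ^ 2 = P * ‖v‖ ^ 2 + 2 * (P * ⟪m, v⟫) - 2 * c * ⟪v, g⟫ + P * ‖s‖ ^ 2 := by
  have hinner : ⟪v, s⟫ = -⟪m, v⟫ + c * (P⁻¹ * ⟪v, g⟫) := by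
    rw [hs, inner_add_right, inner_neg_right, real_inner_smul_right, real_inner_smul_right,
      real_inner_comm]
  rw [norm_sub_sq_real, hinner]
  field_simp
  ring

variable {X : Type*} [MeasurableSpace X] {ν : Measure X} {P d : X → ℝ} {v m g s : X → E}

theorem integral_mul_cost_eq (c : ℝ) (hv : Integrable (fun x => P x * ‖v x‖ ^ 2) ν)
    (hm : Integrable (fun x => P x * ⟪m x, v x⟫) ν) (hd : Integrable (fun x => P x * d x) ν) :
    ∫ x, P x * (‖v x‖ ^ 2 + 2 * ⟪m x, v x⟫ + 2 * c * d x) ∂ν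
      = ∫ x, P x * ‖v x‖ ^ 2 ∂ν + 2 * ∫ x, P x * ⟪m x, v x⟫ ∂ν
        + 2 * c * ∫ x, P x * d x ∂ν := by
  have hcost : ∀ x, P x * (‖v x‖ ^ 2 + 2 * ⟪m x, v x⟫ + 2 * c * d x)
      = P x * ‖v x‖ ^ 2 + 2 * (P x * ⟪m x, v x⟫) + 2 * c * (P x * d x) := fun x => by ring
  simp_rw [hcost]
  rw [integral_add (hv.fun_add (hm.const_mul 2)) (hd.const_mul _),
    integral_add hv (hm.const_mul 2), integral_const_mul, integral_const_mul]

theorem integral_mul_cost_eq_sub {c : ℝ} (hP : ∀ x, P x ≠ 0)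
    (hs : ∀ x, s x = -m x + c • (P x)⁻¹ • g x)
    (hv : Integrable (fun x => P x * ‖v x‖ ^ 2) ν)
    (hm : Integrable (fun x => P x * ⟪m x, v x⟫) ν) (hd : Integrable (fun x => P x * d x) ν)
    (hg : Integrable (fun x => ⟪v x, g x⟫) ν) (hs_int : Integrable (fun x => P x * ‖s x‖ ^ 2) ν)
    (hdiv : ∫ x, (P x * d x + ⟪v x, g x⟫) ∂ν = 0) :
    ∫ x, P x * (‖v x‖ ^ 2 + 2 * ⟪m x, v x⟫ + 2 * c * d x) ∂ν
      = ∫ x, P x * ‖v x - s x‖ ^ 2 ∂ν - ∫ x, P x * ‖s x‖ ^ 2 ∂ν := by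
  have hparts : ∫ x, ⟪v x, g x⟫ ∂ν = -∫ x, P x * d x ∂ν := by
    rw [integral_add hd hg] at hdiv
    linarith
  have hexpand : ∫ x, P x * ‖v x - s x‖ ^ 2 ∂ν
      = ∫ x, P x * ‖v x‖ ^ 2 ∂ν + 2 * ∫ x, P x * ⟪m x, v x⟫ ∂ν
        - 2 * c * ∫ x, ⟪v x, g x⟫ ∂ν + ∫ x, P x * ‖s x‖ ^ 2 ∂ν := by
    simp_rw [mul_norm_sub_sq_of_eq_neg_add_smul (hP _) (hs _)]
    rw [integral_add ((hv.fun_add (hm.const_mul 2)).sub' (hg.const_mul _)) hs_int,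
      integral_sub (hv.fun_add (hm.const_mul 2)) (hg.const_mul _), integral_add hv (hm.const_mul 2),
      integral_const_mul, integral_const_mul]
  rw [integral_mul_cost_eq c hv hm hd, hexpand, hparts]
  ring

end

theorem integral_eq_sub_of_ae_eq_sub {α : Type*} [MeasurableSpace α] {μ : Measure α}
    {L F S : α → ℝ} (hL : Integrable L μ) (hS : Integrable S μ) (h : L =ᵐ[μ] F - S) :
    ∫ a, L a ∂μ = ∫ a, F a ∂μ - ∫ a, S a ∂μ := by
  have hF : Integrable F μ :=
    (hL.add hS).congr (h.mono fun a ha => by simp [ha])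
  exact (integral_congr_ae h).trans (integral_sub hF hS)

theorem costFunctional_decomposition_general
    (D : ℕ) (σ : ℝ)
    (p : ℝ → EuclideanSpace ℝ (Fin D) → ℝ)
    (hp_diff : ∀ t ∈ Set.Icc (0:ℝ) 1, ContDiff ℝ 1 (p t))
    (hp_pos : ∀ t ∈ Set.Icc (0:ℝ) 1, ∀ x, 0 < p t x)
    (μ : EuclideanSpace ℝ (Fin D) → ℝ → EuclideanSpace ℝ (Fin D))
    (φ φs : EuclideanSpace ℝ (Fin D) → ℝ → EuclideanSpace ℝ (Fin D))
    (hφs : ∀ x t, φs x t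
      = -μ x t + σ ^ 2 • gradient (fun y => Real.log (p t y)) x)
    -- integrability in `x` of every integrand appearing above, for both `φ` and `φ*`
    (hInt : ∀ f ∈ ({φ, φs} :
        Set (EuclideanSpace ℝ (Fin D) → ℝ → EuclideanSpace ℝ (Fin D))),
      ∀ t ∈ Set.Icc (0:ℝ) 1,
        Integrable (fun x => p t x * ‖f x t‖ ^ 2) ∧
        Integrable (fun x => p t x * ⟪μ x t, f x t⟫) ∧
        Integrable (fun x => p t x * divg (fun y => f y t) x) ∧
        Integrable (fun x => ⟪f x t, gradient (p t) x⟫))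
    -- integrability in `t` of the corresponding time integrands
    (hIntT : ∀ f ∈ ({φ, φs} :
        Set (EuclideanSpace ℝ (Fin D) → ℝ → EuclideanSpace ℝ (Fin D))),
      IntegrableOn (fun t => ∫ x, p t x * ‖f x t‖ ^ 2) (Set.Icc (0:ℝ) 1) ∧
      IntegrableOn (fun t => ∫ x, p t x * ⟪μ x t, f x t⟫) (Set.Icc (0:ℝ) 1) ∧
      IntegrableOn (fun t => ∫ x, p t x * divg (fun y => f y t) x) (Set.Icc (0:ℝ) 1))
    -- the divergence identity, for a.e. `t ∈ [0,1]`, for both `φ` and `φ*`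
    (hdiv : ∀ f ∈ ({φ, φs} :
        Set (EuclideanSpace ℝ (Fin D) → ℝ → EuclideanSpace ℝ (Fin D))),
      ∀ᵐ t ∂(volume.restrict (Set.Icc (0:ℝ) 1)),
        ∫ x, (p t x * divg (fun y => f y t) x + ⟪f x t, gradient (p t) x⟫) = 0) :
    ∫ t in Set.Icc (0:ℝ) 1, ∫ x,
        p t x * (‖φ x t‖ ^ 2 + 2 * ⟪μ x t, φ x t⟫
          + 2 * σ ^ 2 * divg (fun y => φ y t) x)
      = (∫ t in Set.Icc (0:ℝ) 1, ∫ x, p t x * ‖φ x t - φs x t‖ ^ 2)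
        - ∫ t in Set.Icc (0:ℝ) 1, ∫ x, p t x * ‖φs x t‖ ^ 2 := by
  have hφ_mem : φ ∈ ({φ, φs} : Set _) := Or.inl rfl
  have hφs_mem : φs ∈ ({φ, φs} : Set _) := Or.inr rfl
  have hIcc : ∀ᵐ t ∂(volume.restrict (Set.Icc (0:ℝ) 1)), t ∈ Set.Icc (0:ℝ) 1 :=
    ae_restrict_mem measurableSet_Icc
  obtain ⟨hA, hB, hC⟩ := hIntT φ hφ_mem
  refine integral_eq_sub_of_ae_eq_sub ?_ (hIntT φs hφs_mem).1 ?_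
  · refine ((hA.add (hB.const_mul 2)).add (hC.const_mul (2 * σ ^ 2))).congr ?_
    filter_upwards [hIcc] with t ht
    obtain ⟨hv, hm, hd, -⟩ := hInt φ hφ_mem t ht
    exact (integral_mul_cost_eq _ hv hm hd).symm
  · filter_upwards [hIcc, hdiv φ hφ_mem] with t ht hdiv_t
    obtain ⟨hv, hm, hd, hg⟩ := hInt φ hφ_mem t ht
    have hP : ∀ x, p t x ≠ 0 := fun x => (hp_pos t ht x).ne'
    have hscore : ∀ x, φs x t = -μ x t + σ ^ 2 • (p t x)⁻¹ • gradient (p t) x := fun x => by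
      rw [hφs, gradient_log_apply ((hp_diff t ht).differentiable one_ne_zero x) (hP x)]
    exact integral_mul_cost_eq_sub hP hscore hv hm hd hg (hInt φs hφs_mem t ht).1 hdiv_t

/-- **Exact decomposition of the score-matching cost functional.**
With `φ*(x,t) = -μ(x,t) + σ² ∇ₓ log p_t(x)`, under integrability of all integrands and
the divergence identity for a.e. `t` (for both `φ` and `φ*`), the cost functional
`L[φ] = ∫₀¹ ∫ p_t (‖φ‖² + 2⟪μ,φ⟫ + 2σ² tr J_φ) dx dt` decomposes as
`L[φ] = ∫₀¹ ∫ p_t ‖φ - φ*‖² dx dt - ∫₀¹ ∫ p_t ‖φ*‖² dx dt`. -/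
theorem costFunctional_decomposition
    (D : ℕ) (hD : 1 ≤ D) (σ : ℝ) (hσ : 0 < σ)
    (p : ℝ → EuclideanSpace ℝ (Fin D) → ℝ)
    (hp_diff : ∀ t ∈ Set.Icc (0:ℝ) 1, ContDiff ℝ 1 (p t))
    (hp_pos : ∀ t ∈ Set.Icc (0:ℝ) 1, ∀ x, 0 < p t x)
    (hp_prob : ∀ t ∈ Set.Icc (0:ℝ) 1, ∫ x, p t x = 1)
    (μ : EuclideanSpace ℝ (Fin D) → ℝ → EuclideanSpace ℝ (Fin D))
    (hμ_cont : Continuous fun q : EuclideanSpace ℝ (Fin D) × ℝ => μ q.1 q.2)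
    (φ φs : EuclideanSpace ℝ (Fin D) → ℝ → EuclideanSpace ℝ (Fin D))
    (hφs : ∀ x t, φs x t
      = -μ x t + σ ^ 2 • gradient (fun y => Real.log (p t y)) x)
    (hφ_diff : ContDiffOn ℝ 1 (fun q : EuclideanSpace ℝ (Fin D) × ℝ => φ q.1 q.2)
      (Set.univ ×ˢ Set.Icc (0:ℝ) 1))
    -- integrability in `x` of every integrand appearing above, for both `φ` and `φ*`
    (hInt : ∀ f ∈ ({φ, φs} :
        Set (EuclideanSpace ℝ (Fin D) → ℝ → EuclideanSpace ℝ (Fin D))),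
      ∀ t ∈ Set.Icc (0:ℝ) 1,
        Integrable (fun x => p t x * ‖f x t‖ ^ 2) ∧
        Integrable (fun x => p t x * ⟪μ x t, f x t⟫) ∧
        Integrable (fun x => p t x * divg (fun y => f y t) x) ∧
        Integrable (fun x => ⟪f x t, gradient (p t) x⟫))
    -- integrability in `t` of the corresponding time integrands
    (hIntT : ∀ f ∈ ({φ, φs} :
        Set (EuclideanSpace ℝ (Fin D) → ℝ → EuclideanSpace ℝ (Fin D))),
      IntegrableOn (fun t => ∫ x, p t x * ‖f x t‖ ^ 2) (Set.Icc (0:ℝ) 1) ∧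
      IntegrableOn (fun t => ∫ x, p t x * ⟪μ x t, f x t⟫) (Set.Icc (0:ℝ) 1) ∧
      IntegrableOn (fun t => ∫ x, p t x * divg (fun y => f y t) x) (Set.Icc (0:ℝ) 1))
    -- the divergence identity, for a.e. `t ∈ [0,1]`, for both `φ` and `φ*`
    (hdiv : ∀ f ∈ ({φ, φs} :
        Set (EuclideanSpace ℝ (Fin D) → ℝ → EuclideanSpace ℝ (Fin D))),
      ∀ᵐ t ∂(volume.restrict (Set.Icc (0:ℝ) 1)),
        ∫ x, (p t x * divg (fun y => f y t) x + ⟪f x t, gradient (p t) x⟫) = 0) :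
    ∫ t in Set.Icc (0:ℝ) 1, ∫ x,
        p t x * (‖φ x t‖ ^ 2 + 2 * ⟪μ x t, φ x t⟫
          + 2 * σ ^ 2 * divg (fun y => φ y t) x)
      = (∫ t in Set.Icc (0:ℝ) 1, ∫ x, p t x * ‖φ x t - φs x t‖ ^ 2)
        - ∫ t in Set.Icc (0:ℝ) 1, ∫ x, p t x * ‖φs x t‖ ^ 2 :=
  costFunctional_decomposition_general D σ p hp_diff hp_pos μ φ φs hφs hInt hIntT hdiv
end

section
/- Let D ≥ 1 and let p : ℝ^D → ℝ be a continuously differentiable strictly positive probability density. Let φ : ℝ^D → ℝ^D be continuously differentiable with compact support. Then ∫_{ℝ^D} p(x) · tr J_φ(x) dx = − ∫_{ℝ^D} p(x) · ⟪φ(x), ∇ log p(x)⟫ dx; that is, the expectation under p of the divergence of φ equals minus the expectation under p of the inner product of φ with the score of p. -/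
/-!
Since `p > 0`, the chain rule gives `p ∇ log p = ∇ p`, so the right-hand side is
`-∫ ⟪φ, ∇ p⟫ = -∑ᵢ ∫ ∂ᵢp · φᵢ`. Integrating by parts in each coordinate, with no boundary term
because `φ` has compact support, turns this into `∑ᵢ ∫ p · ∂ᵢφᵢ = ∫ p · div φ`.
-/

open MeasureTheory
open scoped RealInnerProductSpace

theorem Continuous.integrable_mul_of_hasCompactSupport_right {X : Type*} [TopologicalSpace X]
    [MeasurableSpace X] [OpensMeasurableSpace X] {μ : Measure X} [IsFiniteMeasureOnCompacts μ]
    {f g : X → ℝ} (hf : Continuous f) (hg : Continuous g) (hg_supp : HasCompactSupport g) :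
    Integrable (fun x ↦ f x * g x) μ :=
  (hf.mul hg).integrable_of_hasCompactSupport hg_supp.mul_left

section IntegrationByParts

variable {E : Type*} [NormedAddCommGroup E] [NormedSpace ℝ E] [FiniteDimensional ℝ E]
  [MeasurableSpace E] [BorelSpace E] {μ : Measure E} [μ.IsAddHaarMeasure]

theorem HasCompactSupport.integral_mul_fderiv_eq_neg_fderiv_mul {f g : E → ℝ}
    (hg_supp : HasCompactSupport g) (hf : ContDiff ℝ 1 f) (hg : ContDiff ℝ 1 g) (v : E) :
    ∫ x, f x * fderiv ℝ g x v ∂μ = -∫ x, fderiv ℝ f x v * g x ∂μ := by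
  have hf' : Continuous fun x ↦ fderiv ℝ f x v :=
    (hf.continuous_fderiv one_ne_zero).clm_apply continuous_const
  have hg' : Continuous fun x ↦ fderiv ℝ g x v :=
    (hg.continuous_fderiv one_ne_zero).clm_apply continuous_const
  refine integral_mul_fderiv_eq_neg_fderiv_mul_of_integrable ?_ ?_ ?_
    (fun x _ ↦ hf.differentiable one_ne_zero x) (fun x _ ↦ hg.differentiable one_ne_zero x)
  · exact hf'.integrable_mul_of_hasCompactSupport_right hg.continuous hg_supp
  · exact hf.continuous.integrable_mul_of_hasCompactSupport_right hg' (hg_supp.fderiv_apply ℝ v)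
  · exact hf.continuous.integrable_mul_of_hasCompactSupport_right hg.continuous hg_supp

end IntegrationByParts

theorem mul_inner_gradient_log {F : Type*} [NormedAddCommGroup F] [InnerProductSpace ℝ F]
    [CompleteSpace F] {p : F → ℝ} {x : F} (hp : DifferentiableAt ℝ p x) (hpx : p x ≠ 0) (v : F) :
    p x * ⟪v, gradient (fun y ↦ Real.log (p y)) x⟫ = fderiv ℝ p x v := by
  rw [inner_gradient_right, fderiv.log hp hpx]
  simp [hpx]

section EuclideanSpace

variable {ι : Type*} [Fintype ι]

theorem fderiv_apply_eq_sum_mul_fderiv_single [DecidableEq ι] {f : EuclideanSpace ℝ ι → ℝ}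
    (x v : EuclideanSpace ℝ ι) :
    fderiv ℝ f x v = ∑ i, v i * fderiv ℝ f x (EuclideanSpace.single i 1) := by
  conv_lhs => rw [← (EuclideanSpace.basisFun ι ℝ).sum_repr v]
  simp [map_sum]

theorem fderiv_euclideanSpace_apply {E : Type*} [NormedAddCommGroup E] [NormedSpace ℝ E]
    {φ : E → EuclideanSpace ℝ ι} {x : E} (hφ : DifferentiableAt ℝ φ x) (i : ι) (v : E) :
    fderiv ℝ (fun y ↦ φ y i) x v = fderiv ℝ φ x v i :=
  DFunLike.congr_fun ((EuclideanSpace.proj (𝕜 := ℝ) i).hasFDerivAt.comp x hφ.hasFDerivAt).fderiv v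

end EuclideanSpace

theorem integral_mul_divg_eq_neg_integral_fderiv_apply {D : ℕ}
    {f : EuclideanSpace ℝ (Fin D) → ℝ} {φ : EuclideanSpace ℝ (Fin D) → EuclideanSpace ℝ (Fin D)}
    (hf : ContDiff ℝ 1 f) (hφ : ContDiff ℝ 1 φ) (hφ_supp : HasCompactSupport φ) :
    ∫ x, f x * divg φ x = -∫ x, fderiv ℝ f x (φ x) := by
  set e : Fin D → EuclideanSpace ℝ (Fin D) := fun i ↦ EuclideanSpace.single i 1
  have hφi : ∀ i, ContDiff ℝ 1 fun x ↦ φ x i := fun i ↦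
    (EuclideanSpace.proj (𝕜 := ℝ) i).contDiff.comp hφ
  have hφi_supp : ∀ i, HasCompactSupport fun x ↦ φ x i := fun i ↦
    hφ_supp.comp_left (g := fun v : EuclideanSpace ℝ (Fin D) ↦ v i) rfl
  have hdivg : ∀ x, f x * divg φ x = ∑ i, f x * fderiv ℝ (fun y ↦ φ y i) x (e i) := fun x ↦ by
    simp only [divg, Finset.mul_sum,
      fderiv_euclideanSpace_apply (hφ.differentiable one_ne_zero x), e]
  have hscore : ∀ x, fderiv ℝ f x (φ x) = ∑ i, fderiv ℝ f x (e i) * φ x i := fun x ↦ by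
    simp only [fderiv_apply_eq_sum_mul_fderiv_single x (φ x), mul_comm, e]
  calc ∫ x, f x * divg φ x
      = ∑ i, ∫ x, f x * fderiv ℝ (fun y ↦ φ y i) x (e i) := by
        simp_rw [hdivg]
        refine integral_finsetSum _ fun i _ ↦ hf.continuous.integrable_mul_of_hasCompactSupport_right
          ((hφi i).continuous_fderiv one_ne_zero |>.clm_apply continuous_const)
          ((hφi_supp i).fderiv_apply ℝ (e i))
    _ = ∑ i, -∫ x, fderiv ℝ f x (e i) * φ x i := by
        refine Finset.sum_congr rfl fun i _ ↦ ?_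
        exact (hφi_supp i).integral_mul_fderiv_eq_neg_fderiv_mul hf (hφi i) (e i)
    _ = -∫ x, fderiv ℝ f x (φ x) := by
        simp_rw [hscore]
        rw [Finset.sum_neg_distrib, ← integral_finsetSum _ fun i _ ↦
          ((hf.continuous_fderiv one_ne_zero).clm_apply continuous_const)
            |>.integrable_mul_of_hasCompactSupport_right (hφi i).continuous (hφi_supp i)]

theorem integral_divergence_eq_neg_integral_inner_score_general
    (D : ℕ)
    (p : EuclideanSpace ℝ (Fin D) → ℝ)
    (hp_diff : ContDiff ℝ 1 p)
    (hp_pos : ∀ x, 0 < p x)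
    (φ : EuclideanSpace ℝ (Fin D) → EuclideanSpace ℝ (Fin D))
    (hφ_diff : ContDiff ℝ 1 φ)
    (hφ_supp : HasCompactSupport φ) :
    ∫ x, p x * divg φ x
      = - ∫ x, p x * ⟪φ x, gradient (fun y => Real.log (p y)) x⟫ := by
  have hscore : ∀ x, p x * ⟪φ x, gradient (fun y => Real.log (p y)) x⟫ = fderiv ℝ p x (φ x) :=
    fun x ↦ mul_inner_gradient_log (hp_diff.differentiable one_ne_zero x) (hp_pos x).ne' (φ x)
  simp_rw [hscore]
  exact integral_mul_divg_eq_neg_integral_fderiv_apply hp_diff hφ_diff hφ_supp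

/-- **Divergence identity for compactly supported vector fields.**
If `p : ℝ^D → ℝ` is a `C¹` strictly positive probability density and `φ : ℝ^D → ℝ^D` is
`C¹` with compact support, then the expectation under `p` of the divergence of `φ` equals
minus the expectation under `p` of `⟪φ, ∇ log p⟫`. -/
theorem integral_divergence_eq_neg_integral_inner_score
    (D : ℕ) (hD : 1 ≤ D)
    (p : EuclideanSpace ℝ (Fin D) → ℝ)
    (hp_diff : ContDiff ℝ 1 p)
    (hp_pos : ∀ x, 0 < p x)
    (hp_prob : ∫ x, p x = 1)
    (φ : EuclideanSpace ℝ (Fin D) → EuclideanSpace ℝ (Fin D))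
    (hφ_diff : ContDiff ℝ 1 φ)
    (hφ_supp : HasCompactSupport φ) :
    ∫ x, p x * divg φ x
      = - ∫ x, p x * ⟪φ x, gradient (fun y => Real.log (p y)) x⟫ :=
  integral_divergence_eq_neg_integral_inner_score_general D p hp_diff hp_pos φ hφ_diff hφ_supp
end

section
/- Let D ≥ 1 and let A be a symmetric real D × D matrix. Let z be a random vector in ℝ^D with i.i.d. Rademacher coordinates (each z_i takes values ±1 with probability 1/2). Then the variance of the Rademacher Hutchinson trace estimator is Var(zᵀ A z) = 2 Σ_{i ≠ j} A_{ij}² = 2 ( ‖A‖_F² − Σ_i A_{ii}² ). -/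
/-!
Since `z i ^ 2 = 1`, the quadratic form is `trace A + ∑_{i ≠ j} A i j * z_{i,j}`, where
`z_S = ∏_{i ∈ S} z i` are the Walsh functions of the coordinates. They multiply as
`z_S * z_T = z_{S ∆ T}`, and independence with `E[z i] = 0` gives `E[z_S] = [S = ∅]`, so they
are orthonormal. The term `z_{i,j}` occurs for both `(i, j)` and `(j, i)`, so the variance is
`∑_{i ≠ j} A i j * (A i j + A j i)`, which is `2 ∑_{i ≠ j} (A i j)²` for symmetric `A`.
-/

open MeasureTheory ProbabilityTheory
open scoped symmDiff

namespace Finset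

variable {ι M : Type*} [DecidableEq ι]

theorem pair_eq_pair_iff {i j k l : ι} :
    ({i, j} : Finset ι) = {k, l} ↔ i = k ∧ j = l ∨ i = l ∧ j = k := by
  rw [← coe_inj, coe_pair, coe_pair, Set.pair_eq_pair_iff]

theorem sum_offDiag [AddCommMonoid M] (s : Finset ι) (f : ι × ι → M) :
    ∑ p ∈ s.offDiag, f p = ∑ i ∈ s, ∑ j ∈ s.erase i, f (i, j) := by
  have hoff : s.offDiag = (s ×ˢ s).filter fun p => p.1 ≠ p.2 := by ext; simp [and_assoc]
  rw [hoff, sum_filter, sum_product]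
  refine sum_congr rfl fun i _ => ?_
  rw [← sum_filter, filter_ne]

theorem sum_offDiag_ite_pair_eq [AddCommMonoid M] {s : Finset ι} {i j : ι} (hi : i ∈ s)
    (hj : j ∈ s) (hij : i ≠ j) (f : ι → ι → M) :
    ∑ q ∈ s.offDiag, (if ({i, j} : Finset ι) = {q.1, q.2} then f q.1 q.2 else 0)
      = f i j + f j i := by
  have hfilter : s.offDiag.filter (fun q => ({i, j} : Finset ι) = {q.1, q.2})
      = {(i, j), (j, i)} := by
    ext ⟨k, l⟩
    simp only [mem_filter, mem_offDiag, pair_eq_pair_iff, mem_insert, mem_singleton,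
      Prod.ext_iff]
    grind
  rw [← sum_filter, hfilter, sum_pair fun h => hij (Prod.ext_iff.1 h).1]

theorem prod_mul_prod_eq_prod_symmDiff [CommMonoid M] {f : ι → M} {s t : Finset ι}
    (h : ∀ i ∈ s ∩ t, f i * f i = 1) :
    (∏ i ∈ s, f i) * ∏ i ∈ t, f i = ∏ i ∈ s ∆ t, f i := by
  rw [← prod_sdiff (inter_subset_left : s ∩ t ⊆ s),
    ← prod_sdiff (inter_subset_right : s ∩ t ⊆ t),
    sdiff_inter_self_left, sdiff_inter_self_right, symmDiff_def, sup_eq_union,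
    prod_union disjoint_sdiff_sdiff, mul_mul_mul_comm, ← prod_mul_distrib,
    prod_eq_one h, mul_one]

end Finset

noncomputable def rademacherMeasure : Measure ℝ :=
  (2 : ENNReal)⁻¹ • Measure.dirac 1 + (2 : ENNReal)⁻¹ • Measure.dirac (-1)

lemma ae_abs_eq_one_rademacherMeasure : ∀ᵐ x ∂rademacherMeasure, |x| = 1 := by
  simp [rademacherMeasure]

lemma integral_id_rademacherMeasure : ∫ x, x ∂rademacherMeasure = 0 := by
  have hint (a : ℝ) : Integrable (fun x : ℝ => x) (Measure.dirac a) :=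
    integrable_dirac (by simp)
  rw [rademacherMeasure, integral_add_measure ((hint 1).smul_measure (by simp))
    ((hint (-1)).smul_measure (by simp))]
  simp

section Rademacher

variable {Ω : Type*} [MeasurableSpace Ω] {μ : Measure Ω} {X : Ω → ℝ}

lemma ae_abs_eq_one_of_map_eq_rademacherMeasure (hX : AEMeasurable X μ)
    (h : μ.map X = rademacherMeasure) : ∀ᵐ ω ∂μ, |X ω| = 1 :=
  ae_of_ae_map hX (h ▸ ae_abs_eq_one_rademacherMeasure)

lemma integral_eq_zero_of_map_eq_rademacherMeasure (hX : AEMeasurable X μ)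
    (h : μ.map X = rademacherMeasure) : ∫ ω, X ω ∂μ = 0 := by
  rw [← integral_id_rademacherMeasure, ← h]
  exact (integral_map hX aestronglyMeasurable_id).symm

end Rademacher

section Walsh

variable {ι Ω : Type*} [MeasurableSpace Ω] {μ : Measure Ω} {z : ι → Ω → ℝ}

def walsh (z : ι → Ω → ℝ) (S : Finset ι) (ω : Ω) : ℝ := ∏ i ∈ S, z i ω

lemma walsh_mul_walsh_ae_eq [DecidableEq ι] (habs : ∀ i, ∀ᵐ ω ∂μ, |z i ω| = 1)
    (S T : Finset ι) : (fun ω => walsh z S ω * walsh z T ω) =ᵐ[μ] walsh z (S ∆ T) := by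
  filter_upwards [(S ∩ T).eventually_all.2 fun i _ => habs i] with ω hω
  refine Finset.prod_mul_prod_eq_prod_symmDiff fun i hi => ?_
  rw [← abs_mul_abs_self, hω i hi, mul_one]

lemma integrable_walsh [IsFiniteMeasure μ] (hmeas : ∀ i, AEMeasurable (z i) μ)
    (habs : ∀ i, ∀ᵐ ω ∂μ, |z i ω| = 1) (S : Finset ι) : Integrable (walsh z S) μ := by
  refine Integrable.mono' (integrable_const 1)
    (S.aestronglyMeasurable_fun_prod fun i _ => (hmeas i).aestronglyMeasurable) ?_
  filter_upwards [S.eventually_all.2 fun i _ => habs i] with ω hω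
  rw [walsh, Real.norm_eq_abs, Finset.abs_prod, Finset.prod_eq_one hω]

lemma integral_walsh [Fintype ι] [DecidableEq ι] (hz : iIndepFun z μ)
    (hmeas : ∀ i, AEMeasurable (z i) μ) (hmean : ∀ i, ∫ ω, z i ω ∂μ = 0)
    (S : Finset ι) : ∫ ω, walsh z S ω ∂μ = if S = ∅ then 1 else 0 := by
  have := hz.isProbabilityMeasure
  calc ∫ ω, walsh z S ω ∂μ
        = ∫ ω, ∏ i, (fun x => if i ∈ S then x else 1) (z i ω) ∂μ := by
        simp [walsh, Finset.prod_ite_mem]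
    _ = ∏ i, ∫ ω, (if i ∈ S then z i ω else 1) ∂μ :=
        hz.integral_fun_prod_comp (f := fun i x => if i ∈ S then x else 1) hmeas
          (fun i => by split_ifs <;> fun_prop)
    _ = ∏ i, if i ∈ S then 0 else 1 := by
        congr with i
        split_ifs <;> simp [hmean]
    _ = if S = ∅ then 1 else 0 := by
        simp [zero_pow_eq, Finset.card_eq_zero]

lemma integral_walsh_mul_walsh [Fintype ι] [DecidableEq ι] (hz : iIndepFun z μ)
    (hmeas : ∀ i, AEMeasurable (z i) μ) (hmean : ∀ i, ∫ ω, z i ω ∂μ = 0)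
    (habs : ∀ i, ∀ᵐ ω ∂μ, |z i ω| = 1) (S T : Finset ι) :
    ∫ ω, walsh z S ω * walsh z T ω ∂μ = if S = T then 1 else 0 := by
  rw [integral_congr_ae (walsh_mul_walsh_ae_eq habs S T), integral_walsh hz hmeas hmean]
  simp only [Finset.symmDiff_eq_empty]

end Walsh

lemma integral_sum_mul_sq {Ω κ : Type*} [MeasurableSpace Ω] {μ : Measure Ω} {s : Finset κ}
    {c : κ → ℝ} {w : κ → Ω → ℝ}
    (h : ∀ p ∈ s, ∀ q ∈ s, Integrable (fun ω => w p ω * w q ω) μ) :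
    ∫ ω, (∑ p ∈ s, c p * w p ω) ^ 2 ∂μ
      = ∑ p ∈ s, ∑ q ∈ s, c p * c q * ∫ ω, w p ω * w q ω ∂μ := by
  have hterm (p q : κ) (ω : Ω) :
      c p * w p ω * (c q * w q ω) = c p * c q * (w p ω * w q ω) := by
    ring
  simp_rw [sq, Finset.sum_mul_sum, hterm]
  rw [integral_finsetSum _ fun p hp =>
    integrable_finsetSum _ fun q hq => (h p hp q hq).const_mul _]
  refine Finset.sum_congr rfl fun p hp => ?_
  rw [integral_finsetSum _ fun q hq => (h p hp q hq).const_mul _]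
  exact Finset.sum_congr rfl fun q _ => integral_const_mul _ _

section QuadForm

variable {ι Ω : Type*} [Fintype ι] [DecidableEq ι] [MeasurableSpace Ω] {μ : Measure Ω}
  {z : ι → Ω → ℝ} (A : Matrix ι ι ℝ)

noncomputable def offDiagQuadForm (z : ι → Ω → ℝ) (ω : Ω) : ℝ :=
  ∑ p ∈ Finset.univ.offDiag, A p.1 p.2 * walsh z {p.1, p.2} ω

lemma quadForm_ae_eq_offDiagQuadForm_add_trace (habs : ∀ i, ∀ᵐ ω ∂μ, |z i ω| = 1) :
    (fun ω => ∑ i, ∑ j, z i ω * A i j * z j ω)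
      =ᵐ[μ] fun ω => offDiagQuadForm A z ω + A.trace := by
  filter_upwards [ae_all_iff.2 habs] with ω hω
  have hrow (i : ι) : ∑ j, z i ω * A i j * z j ω
      = ∑ j ∈ Finset.univ.erase i, A i j * walsh z {i, j} ω + A i i := by
    have hsq : z i ω * z i ω = 1 := by rw [← abs_mul_abs_self, hω i, mul_one]
    rw [← Finset.add_sum_erase _ _ (Finset.mem_univ i), add_comm]
    congr 1
    · refine Finset.sum_congr rfl fun j hj => ?_
      rw [walsh, Finset.prod_pair (Finset.ne_of_mem_erase hj).symm]
      ring
    · linear_combination A i i * hsq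
  simp_rw [hrow, Finset.sum_add_distrib, offDiagQuadForm, Finset.sum_offDiag, Matrix.trace,
    Matrix.diag]

lemma integral_offDiagQuadForm (hz : iIndepFun z μ) (hmeas : ∀ i, AEMeasurable (z i) μ)
    (hmean : ∀ i, ∫ ω, z i ω ∂μ = 0) (habs : ∀ i, ∀ᵐ ω ∂μ, |z i ω| = 1) :
    ∫ ω, offDiagQuadForm A z ω ∂μ = 0 := by
  have := hz.isProbabilityMeasure
  unfold offDiagQuadForm
  rw [integral_finsetSum _ fun p _ => (integrable_walsh hmeas habs _).const_mul _]
  refine Finset.sum_eq_zero fun p _ => ?_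
  rw [integral_const_mul, integral_walsh hz hmeas hmean, if_neg (Finset.insert_ne_empty _ _),
    mul_zero]

lemma integral_offDiagQuadForm_sq (hz : iIndepFun z μ) (hmeas : ∀ i, AEMeasurable (z i) μ)
    (hmean : ∀ i, ∫ ω, z i ω ∂μ = 0) (habs : ∀ i, ∀ᵐ ω ∂μ, |z i ω| = 1) :
    ∫ ω, offDiagQuadForm A z ω ^ 2 ∂μ
      = ∑ p ∈ Finset.univ.offDiag, A p.1 p.2 * (A p.1 p.2 + A p.2 p.1) := by
  have := hz.isProbabilityMeasure
  unfold offDiagQuadForm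
  rw [integral_sum_mul_sq fun p _ q _ => (integrable_walsh hmeas habs _).congr
    (walsh_mul_walsh_ae_eq habs _ _).symm]
  refine Finset.sum_congr rfl fun ⟨i, j⟩ hp => ?_
  obtain ⟨hi, hj, hij⟩ := Finset.mem_offDiag.1 hp
  simp_rw [integral_walsh_mul_walsh hz hmeas hmean habs]
  rw [← Finset.sum_offDiag_ite_pair_eq hi hj hij A, Finset.mul_sum]
  refine Finset.sum_congr rfl fun q _ => ?_
  split_ifs <;> ring

lemma variance_quadForm (hz : iIndepFun z μ) (hmeas : ∀ i, AEMeasurable (z i) μ)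
    (hmean : ∀ i, ∫ ω, z i ω ∂μ = 0) (habs : ∀ i, ∀ᵐ ω ∂μ, |z i ω| = 1) :
    variance (fun ω => ∑ i, ∑ j, z i ω * A i j * z j ω) μ
      = ∑ p ∈ Finset.univ.offDiag, A p.1 p.2 * (A p.1 p.2 + A p.2 p.1) := by
  have := hz.isProbabilityMeasure
  have hY : AEMeasurable (offDiagQuadForm A z) μ := by
    unfold offDiagQuadForm walsh
    fun_prop
  rw [variance_congr (quadForm_ae_eq_offDiagQuadForm_add_trace A habs),
    variance_add_const hY.aestronglyMeasurable, variance_eq_integral hY,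
    integral_offDiagQuadForm A hz hmeas hmean habs]
  simp_rw [sub_zero]
  exact integral_offDiagQuadForm_sq A hz hmeas hmean habs

end QuadForm

theorem hutchinson_rademacher_variance_general
    (D : ℕ) (A : Matrix (Fin D) (Fin D) ℝ) (hA : A.IsSymm)
    {Ω : Type*} [MeasureSpace Ω]
    (z : Fin D → Ω → ℝ)
    (hmeas : ∀ i, Measurable (z i))
    (hindep : iIndepFun z ℙ)
    (hrad : ∀ i, Measure.map (z i) ℙ
      = (2 : ENNReal)⁻¹ • Measure.dirac (1 : ℝ) + (2 : ENNReal)⁻¹ • Measure.dirac (-1 : ℝ)) :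
    variance (fun ω => ∑ i, ∑ j, z i ω * A i j * z j ω) ℙ
        = 2 * ∑ i, ∑ j ∈ Finset.univ.erase i, (A i j) ^ 2
      ∧ variance (fun ω => ∑ i, ∑ j, z i ω * A i j * z j ω) ℙ
        = 2 * ((∑ i, ∑ j, (A i j) ^ 2) - ∑ i, (A i i) ^ 2) := by
  have haemeas i := (hmeas i).aemeasurable (μ := ℙ)
  have hmean i := integral_eq_zero_of_map_eq_rademacherMeasure (haemeas i) (hrad i)
  have habs i := ae_abs_eq_one_of_map_eq_rademacherMeasure (haemeas i) (hrad i)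
  have hsymm : ∑ p ∈ Finset.univ.offDiag, A p.1 p.2 * (A p.1 p.2 + A p.2 p.1)
      = 2 * ∑ i, ∑ j ∈ Finset.univ.erase i, A i j ^ 2 := by
    simp_rw [Finset.sum_offDiag, Finset.mul_sum, hA.apply]
    ring_nf
  have hvar := (variance_quadForm A hindep haemeas hmean habs).trans hsymm
  refine ⟨hvar, hvar.trans ?_⟩
  rw [← Finset.sum_sub_distrib]
  congr 1
  refine Finset.sum_congr rfl fun i _ => ?_
  rw [← Finset.add_sum_erase _ _ (Finset.mem_univ i), add_sub_cancel_left]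

/-- **Variance of the Rademacher Hutchinson trace estimator.**
If `A` is a symmetric real `D × D` matrix and the coordinates `z i` are i.i.d. Rademacher
(taking values `±1` each with probability `1/2`), then
`Var(zᵀ A z) = 2 ∑_{i ≠ j} A_{ij}² = 2 (‖A‖_F² - ∑_i A_{ii}²)`. -/
theorem hutchinson_rademacher_variance
    (D : ℕ) (hD : 1 ≤ D) (A : Matrix (Fin D) (Fin D) ℝ) (hA : A.IsSymm)
    {Ω : Type*} [MeasureSpace Ω] [IsProbabilityMeasure (ℙ : Measure Ω)]
    (z : Fin D → Ω → ℝ)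
    (hmeas : ∀ i, Measurable (z i))
    (hindep : iIndepFun z ℙ)
    (hrad : ∀ i, Measure.map (z i) ℙ
      = (2 : ENNReal)⁻¹ • Measure.dirac (1 : ℝ) + (2 : ENNReal)⁻¹ • Measure.dirac (-1 : ℝ)) :
    variance (fun ω => ∑ i, ∑ j, z i ω * A i j * z j ω) ℙ
        = 2 * ∑ i, ∑ j ∈ Finset.univ.erase i, (A i j) ^ 2
      ∧ variance (fun ω => ∑ i, ∑ j, z i ω * A i j * z j ω) ℙ
        = 2 * ((∑ i, ∑ j, (A i j) ^ 2) - ∑ i, (A i i) ^ 2) :=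
  hutchinson_rademacher_variance_general D A hA z hmeas hindep hrad
end

section
/- Reverse-time Fokker–Planck / Nelson drift relation: let D ≥ 1, σ > 0, let μ : ℝ^D × [0,1] → ℝ^D be continuously differentiable, and let p : [0,1] × ℝ^D → ℝ be twice continuously differentiable in x, continuously differentiable in t, strictly positive, and satisfy the Fokker–Planck equation ∂_t p(t,x) = − div_x( μ(x,t) p(t,x) ) + (σ²/2) Δ_x p(t,x) for all (t,x) ∈ [0,1] × ℝ^D. Define the time-reversed density q(τ, x) = p(1 − τ, x) and the backward drift ν(x, τ) = − μ(x, 1 − τ) + σ² ∇_x log p(1 − τ, x). Then q satisfies the Fokker–Planck equation with drift ν: ∂_τ q(τ,x) = − div_x( ν(x,τ) q(τ,x) ) + (σ²/2) Δ_x q(τ,x) for all (τ,x) ∈ [0,1] × ℝ^D. -/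
open MeasureTheory
open scoped RealInnerProductSpace

/-- The Laplacian of a scalar field `f : ℝ^D → ℝ`: `Δf(x) = ∑ i ∂²ᵢ f(x)`. -/
noncomputable def lapl {D : ℕ}
    (f : EuclideanSpace ℝ (Fin D) → ℝ)
    (x : EuclideanSpace ℝ (Fin D)) : ℝ :=
  ∑ i, fderiv ℝ (fun y => fderiv ℝ f y (EuclideanSpace.single i 1)) x
    (EuclideanSpace.single i 1)

/-!
Reversing time only flips the sign of the time derivative, so the claim reduces to
`div (q ν) = -div (p μ) + σ² Δp` at time `1 - τ`. Since `p ∇ log p = ∇p` for positive `p`,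
the flux `q ν` is `-p μ + σ² ∇p`, and `div ∇p = Δp`.
-/

section Gradient

variable {F : Type*} [NormedAddCommGroup F] [InnerProductSpace ℝ F] [CompleteSpace F]
  {f : F → ℝ}

lemma ContDiff.gradient {n : WithTop ℕ∞} (hf : ContDiff ℝ (n + 1) f) :
    ContDiff ℝ n (gradient f) :=
  (InnerProductSpace.toDual ℝ F).symm.contDiff.comp (hf.fderiv_right le_rfl)

lemma smul_gradient_log {x : F} (hf : DifferentiableAt ℝ f x) (hx : f x ≠ 0) :
    f x • gradient (fun y => Real.log (f y)) x = gradient f x := by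
  rw [(hf.hasFDerivAt.log hx).hasGradientAt.gradient, gradient,
    (InnerProductSpace.toDual ℝ F).symm.map_smul, smul_smul, mul_inv_cancel₀ hx, one_smul]

end Gradient

lemma EuclideanSpace.gradient_apply {D : ℕ} (f : EuclideanSpace ℝ (Fin D) → ℝ)
    (x : EuclideanSpace ℝ (Fin D)) (i : Fin D) :
    gradient f x i = fderiv ℝ f x (single i 1) := by
  rw [← inner_gradient_left, inner_single_right]
  simp

section Divergence

variable {D : ℕ} {f g : EuclideanSpace ℝ (Fin D) → EuclideanSpace ℝ (Fin D)}
  {x : EuclideanSpace ℝ (Fin D)}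

lemma divg_add (hf : DifferentiableAt ℝ f x) (hg : DifferentiableAt ℝ g x) :
    divg (fun y => f y + g y) x = divg f x + divg g x := by
  simp only [divg, fderiv_fun_add hf hg, add_apply, PiLp.add_apply,
    Finset.sum_add_distrib]

lemma divg_neg : divg (fun y => -f y) x = -divg f x := by
  simp only [divg, fderiv_fun_neg, neg_apply, PiLp.neg_apply,
    Finset.sum_neg_distrib]

lemma divg_const_smul (c : ℝ) (hf : DifferentiableAt ℝ f x) :
    divg (fun y => c • f y) x = c * divg f x := by
  simp only [divg, fderiv_fun_const_smul hf, smul_apply, PiLp.smul_apply,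
    smul_eq_mul, Finset.mul_sum]

lemma divg_gradient {u : EuclideanSpace ℝ (Fin D) → ℝ}
    (hu : DifferentiableAt ℝ (gradient u) x) : divg (gradient u) x = lapl u x := by
  refine Finset.sum_congr rfl fun i _ => ?_
  have hcoord : (fun y => fderiv ℝ u y (EuclideanSpace.single i 1))
      = EuclideanSpace.proj i ∘ gradient u := by
    funext y
    simp [EuclideanSpace.gradient_apply]
  rw [hcoord, ((EuclideanSpace.proj i).hasFDerivAt.comp x hu.hasFDerivAt).fderiv]
  rfl

end Divergence

open scoped Pointwise in
lemma derivWithin_comp_one_sub_Icc {F : Type*} [NormedAddCommGroup F] [NormedSpace ℝ F]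
    (f : ℝ → F) (τ : ℝ) :
    derivWithin (fun s => f (1 - s)) (Set.Icc 0 1) τ = -derivWithin f (Set.Icc 0 1) (1 - τ) := by
  have hIcc : (1 : ℝ) +ᵥ -Set.Icc (0 : ℝ) 1 = Set.Icc 0 1 := by
    ext s
    simp
  rw [derivWithin_comp_const_sub, hIcc]

theorem reverse_time_fokker_planck_general
    (D : ℕ) (σ : ℝ)
    (μ : EuclideanSpace ℝ (Fin D) → ℝ → EuclideanSpace ℝ (Fin D))
    (hμ : ContDiff ℝ 1 fun q : EuclideanSpace ℝ (Fin D) × ℝ => μ q.1 q.2)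
    (p : ℝ → EuclideanSpace ℝ (Fin D) → ℝ)
    (hp_x : ∀ t ∈ Set.Icc (0:ℝ) 1, ContDiff ℝ 2 (p t))
    (hp_pos : ∀ t ∈ Set.Icc (0:ℝ) 1, ∀ x, 0 < p t x)
    (hFP : ∀ t ∈ Set.Icc (0:ℝ) 1, ∀ x,
      derivWithin (fun s => p s x) (Set.Icc (0:ℝ) 1) t
        = -divg (fun y => p t y • μ y t) x + σ ^ 2 / 2 * lapl (p t) x)
    (q : ℝ → EuclideanSpace ℝ (Fin D) → ℝ)
    (hq : ∀ τ x, q τ x = p (1 - τ) x)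
    (ν : EuclideanSpace ℝ (Fin D) → ℝ → EuclideanSpace ℝ (Fin D))
    (hν : ∀ x τ, ν x τ = -μ x (1 - τ)
      + σ ^ 2 • gradient (fun y => Real.log (p (1 - τ) y)) x) :
    ∀ τ ∈ Set.Icc (0:ℝ) 1, ∀ x,
      derivWithin (fun s => q s x) (Set.Icc (0:ℝ) 1) τ
        = -divg (fun y => q τ y • ν y τ) x + σ ^ 2 / 2 * lapl (q τ) x := by
  intro τ hτ x
  have ht : 1 - τ ∈ Set.Icc (0:ℝ) 1 := ⟨by linarith [hτ.2], by linarith [hτ.1]⟩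
  set u := p (1 - τ)
  have hu : ContDiff ℝ 2 u := hp_x _ ht
  have hqτ : q τ = u := funext (hq τ)
  have hflux : (fun y => q τ y • ν y τ)
      = fun y => -(u y • μ y (1 - τ)) + σ ^ 2 • gradient u y := by
    funext y
    rw [hqτ, hν, smul_add, smul_neg, smul_comm, smul_gradient_log
      (hu.differentiable two_ne_zero y) (hp_pos _ ht y).ne']
  have hdrift : DifferentiableAt ℝ (fun y => u y • μ y (1 - τ)) x :=
    ((hu.differentiable two_ne_zero).smul
      ((hμ.differentiable one_ne_zero).comp (differentiable_id.prodMk (differentiable_const _)))) x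
  have hgrad : DifferentiableAt ℝ (gradient u) x :=
    (hu.gradient (n := 1)).differentiable one_ne_zero x
  have hdiv : divg (fun y => q τ y • ν y τ) x
      = -divg (fun y => u y • μ y (1 - τ)) x + σ ^ 2 * lapl u x := by
    rw [hflux, divg_add hdrift.fun_neg (hgrad.fun_const_smul _),
      divg_neg, divg_const_smul _ hgrad, divg_gradient hgrad]
  rw [funext fun s => hq s x, derivWithin_comp_one_sub_Icc (fun t => p t x), hFP _ ht, hdiv, hqτ]
  ring

/-- **Reverse-time Fokker–Planck / Nelson drift relation.**
If the strictly positive density `p` (C² in `x`, C¹ in `t` on `[0,1]`) solves the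
Fokker–Planck equation `∂ₜ p = -div(μ p) + (σ²/2) Δp` on `[0,1] × ℝ^D` with `C¹` drift
`μ`, then the time-reversed density `q(τ,x) = p(1-τ,x)` solves the Fokker–Planck
equation with the backward drift `ν(x,τ) = -μ(x,1-τ) + σ² ∇ₓ log p(1-τ,x)`:
`∂_τ q = -div(ν q) + (σ²/2) Δq` on `[0,1] × ℝ^D`. -/
theorem reverse_time_fokker_planck
    (D : ℕ) (hD : 1 ≤ D) (σ : ℝ) (hσ : 0 < σ)
    (μ : EuclideanSpace ℝ (Fin D) → ℝ → EuclideanSpace ℝ (Fin D))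
    (hμ : ContDiff ℝ 1 fun q : EuclideanSpace ℝ (Fin D) × ℝ => μ q.1 q.2)
    (p : ℝ → EuclideanSpace ℝ (Fin D) → ℝ)
    (hp_x : ∀ t ∈ Set.Icc (0:ℝ) 1, ContDiff ℝ 2 (p t))
    (hp_t : ∀ x, ContDiffOn ℝ 1 (fun t => p t x) (Set.Icc (0:ℝ) 1))
    (hp_pos : ∀ t ∈ Set.Icc (0:ℝ) 1, ∀ x, 0 < p t x)
    (hFP : ∀ t ∈ Set.Icc (0:ℝ) 1, ∀ x,
      derivWithin (fun s => p s x) (Set.Icc (0:ℝ) 1) t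
        = -divg (fun y => p t y • μ y t) x + σ ^ 2 / 2 * lapl (p t) x)
    (q : ℝ → EuclideanSpace ℝ (Fin D) → ℝ)
    (hq : ∀ τ x, q τ x = p (1 - τ) x)
    (ν : EuclideanSpace ℝ (Fin D) → ℝ → EuclideanSpace ℝ (Fin D))
    (hν : ∀ x τ, ν x τ = -μ x (1 - τ)
      + σ ^ 2 • gradient (fun y => Real.log (p (1 - τ) y)) x) :
    ∀ τ ∈ Set.Icc (0:ℝ) 1, ∀ x,
      derivWithin (fun s => q s x) (Set.Icc (0:ℝ) 1) τ
        = -divg (fun y => q τ y • ν y τ) x + σ ^ 2 / 2 * lapl (q τ) x :=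
  reverse_time_fokker_planck_general D σ μ hμ p hp_x hp_pos hFP q hq ν hν
end
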